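/- Under the two-Gaussian reward with v = v_loc + v_⊥ + γ(v_opt − v_loc) and v_⊥ ⊥ (v_opt − v_loc), the projection of the gradient onto the perpendicular component satisfies ⟨∇r(v), v_⊥⟩ = −(‖v_⊥‖²/w²)·(A_loc·exp(-‖v−v_loc‖²/(2w²)) + A_opt·exp(-‖v−v_opt‖²/(2w²))); in particular ⟨∇r(v), v_⊥⟩ ≤ 0, with equality iff v_⊥ = 0. -/

import Mathlib

open Real RealInnerProductSpace

lemma gauss_grad {n : ℕ} (c : EuclideanSpace ℝ (Fin n)) (A w : ℝ) (hw : 0 < w)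
    (v : EuclideanSpace ℝ (Fin n)) :
    HasGradientAt (fun u => A * Real.exp (-‖u - c‖ ^ 2 / (2 * w ^ 2)))
      ((-(A / w ^ 2) * Real.exp (-‖v - c‖ ^ 2 / (2 * w ^ 2))) • (v - c)) v := by
  rw [hasGradientAt_iff_hasFDerivAt]
  have h1 : HasFDerivAt (fun u : EuclideanSpace ℝ (Fin n) => ‖u - c‖ ^ 2)
      (2 • (innerSL ℝ (v - c)).comp (ContinuousLinearMap.id ℝ _)) v := by
    simpa using ((hasFDerivAt_id v).sub_const c).norm_sq
  have h2 := ((h1.const_mul (-(2 * w ^ 2))⁻¹).exp).const_mul A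
  convert h2 using 1
  · ext u
    ring_nf
  · ext u
    ring_nf
  · ext y
    simp [InnerProductSpace.toDual, real_inner_smul_left, ContinuousLinearMap.smul_apply,
      real_inner_comm]
    ring_nf

/-- Projection of the gradient of the two-Gaussian reward onto the perpendicular component. -/
theorem inner_gradient_perp_two_gaussian_reward
    (n : ℕ)
    (v_loc v_opt : EuclideanSpace ℝ (Fin n))
    (A_loc A_opt w γ : ℝ) (hA_loc : 0 < A_loc) (hA_opt : 0 < A_opt) (hw : 0 < w)
    (vperp : EuclideanSpace ℝ (Fin n))
    (hperp : ⟪vperp, v_opt - v_loc⟫ = 0)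
    (r : EuclideanSpace ℝ (Fin n) → ℝ)
    (hr : ∀ u, r u =
      A_loc * Real.exp (-‖u - v_loc‖ ^ 2 / (2 * w ^ 2)) +
      A_opt * Real.exp (-‖u - v_opt‖ ^ 2 / (2 * w ^ 2)))
    (v : EuclideanSpace ℝ (Fin n))
    (hv : v = v_loc + vperp + γ • (v_opt - v_loc)) :
    ⟪gradient r v, vperp⟫ =
      -(‖vperp‖ ^ 2 / w ^ 2) *
        (A_loc * Real.exp (-‖v - v_loc‖ ^ 2 / (2 * w ^ 2)) +
         A_opt * Real.exp (-‖v - v_opt‖ ^ 2 / (2 * w ^ 2))) ∧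
    ⟪gradient r v, vperp⟫ ≤ 0 ∧
    (⟪gradient r v, vperp⟫ = 0 ↔ vperp = 0) := by
  set Eloc := Real.exp (-‖v - v_loc‖ ^ 2 / (2 * w ^ 2)) with hEl
  set Eopt := Real.exp (-‖v - v_opt‖ ^ 2 / (2 * w ^ 2)) with hEo
  have hgrad : HasGradientAt r
      ((-(A_loc / w ^ 2) * Eloc) • (v - v_loc) + (-(A_opt / w ^ 2) * Eopt) • (v - v_opt)) v := by
    have hA := (gauss_grad v_loc A_loc w hw v).hasFDerivAt.add
      (gauss_grad v_opt A_opt w hw v).hasFDerivAt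
    rw [← map_add] at hA
    have := (hasGradientAt_iff_hasFDerivAt).mpr hA
    exact HasGradientAt.congr_of_eventuallyEq this (Filter.Eventually.of_forall fun u => (hr u))
  rw [hgrad.gradient]
  have h1 : ⟪v - v_loc, vperp⟫ = ‖vperp‖ ^ 2 := by
    have : v - v_loc = vperp + γ • (v_opt - v_loc) := by rw [hv]; abel
    rw [this, inner_add_left, real_inner_smul_left, show (inner ℝ (v_opt - v_loc) vperp : ℝ) = 0 from by rw [real_inner_comm]; exact hperp,
      real_inner_self_eq_norm_sq]
    ring
  have h2 : ⟪v - v_opt, vperp⟫ = ‖vperp‖ ^ 2 := by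
    have : v - v_opt = vperp + (γ - 1) • (v_opt - v_loc) := by
      rw [hv, sub_smul, one_smul]; abel
    rw [this, inner_add_left, real_inner_smul_left, show (inner ℝ (v_opt - v_loc) vperp : ℝ) = 0 from by rw [real_inner_comm]; exact hperp,
      real_inner_self_eq_norm_sq]
    ring
  have key : ⟪(-(A_loc / w ^ 2) * Eloc) • (v - v_loc) + (-(A_opt / w ^ 2) * Eopt) • (v - v_opt),
      vperp⟫ = -(‖vperp‖ ^ 2 / w ^ 2) * (A_loc * Eloc + A_opt * Eopt) := by
    rw [inner_add_left, real_inner_smul_left, real_inner_smul_left, h1, h2]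
    field_simp
    ring
  refine ⟨key, ?_, ?_⟩
  · rw [key]
    have hpos : 0 < A_loc * Eloc + A_opt * Eopt := by positivity
    have : 0 ≤ ‖vperp‖ ^ 2 / w ^ 2 := by positivity
    nlinarith
  · rw [key]
    constructor
    · intro h
      have hpos : 0 < A_loc * Eloc + A_opt * Eopt := by positivity
      have hn : ‖vperp‖ ^ 2 / w ^ 2 = 0 := by
        by_contra hne
        have : ‖vperp‖ ^ 2 / w ^ 2 > 0 := lt_of_le_of_ne (by positivity) (Ne.symm hne)
        nlinarith
      have : ‖vperp‖ = 0 := by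
        have hw2 : (0:ℝ) < w ^ 2 := by positivity
        have := (div_eq_zero_iff.mp hn).resolve_right (ne_of_gt hw2)
        exact pow_eq_zero_iff (by norm_num) |>.mp this
      simpa using this
    · intro h
      simp [h]
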